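/- Let h > 0, k > 0 with 0 < kh < 2, and ω > 0. Then the ω-Jacobi smoothing factor of the standard 5-point Helmholtz operator at θ = (0,0) satisfies S̃_h(0,0) = 1 − ω + 4ω/(4 − k²h²) = 1 + ω k²h²/(4 − k²h²) > 1; in particular the ω-Jacobi smoother is divergent for the Helmholtz equation. -/

import Mathlib

/-- ω-Jacobi smoothing factor of the standard 5-point Helmholtz operator. -/
noncomputable def jacobiSmoothingFactor (h k ω θ₁ θ₂ : ℝ) : ℝ :=
  1 - ω + 2 * ω / (4 - k ^ 2 * h ^ 2) * (Real.cos θ₁ + Real.cos θ₂)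

/-! At `θ = 0` both cosines equal `1`, so the factor is `1 - ω + 4ω/(4 - k²h²)`, which exceeds `1`
by `ωk²h²/(4 - k²h²)`; this excess is positive exactly because the Helmholtz shift `-k²` makes the
denominator `4 - k²h²` smaller than the `4` of the Laplacian. -/

theorem jacobiSmoothingFactor_zero (h k ω : ℝ) :
    jacobiSmoothingFactor h k ω 0 0 = 1 - ω + 4 * ω / (4 - k ^ 2 * h ^ 2) := by
  simp only [jacobiSmoothingFactor, Real.cos_zero]
  ring

theorem one_sub_add_four_mul_div_eq {ω s : ℝ} (hs : 4 - s ≠ 0) :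
    1 - ω + 4 * ω / (4 - s) = 1 + ω * s / (4 - s) := by
  field_simp
  ring

theorem sq_mul_sq_mem_Ioo {h k : ℝ} (hh : 0 < h) (hk : 0 < k) (hkh : k * h < 2) :
    k ^ 2 * h ^ 2 ∈ Set.Ioo 0 4 := by
  have hpos : 0 < k * h := mul_pos hk hh
  rw [← mul_pow]
  exact ⟨by positivity, by nlinarith⟩

/-- the ω-Jacobi smoothing factor at `θ = (0,0)` equals
`1 − ω + 4ω/(4 − k²h²) = 1 + ωk²h²/(4 − k²h²)` and is `> 1`; hence the
ω-Jacobi smoother is divergent for the Helmholtz equation. -/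
theorem stmt14 (h k ω : ℝ) (hh : 0 < h) (hk : 0 < k) (hkh : k * h < 2)
    (hω : 0 < ω) :
    jacobiSmoothingFactor h k ω 0 0 = 1 - ω + 4 * ω / (4 - k ^ 2 * h ^ 2) ∧
    jacobiSmoothingFactor h k ω 0 0 = 1 + ω * k ^ 2 * h ^ 2 / (4 - k ^ 2 * h ^ 2) ∧
    1 < jacobiSmoothingFactor h k ω 0 0 := by
  obtain ⟨hs_pos, hs_lt⟩ := sq_mul_sq_mem_Ioo hh hk hkh
  have hden : 0 < 4 - k ^ 2 * h ^ 2 := sub_pos.mpr hs_lt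
  have hform : jacobiSmoothingFactor h k ω 0 0 = 1 + ω * k ^ 2 * h ^ 2 / (4 - k ^ 2 * h ^ 2) := by
    rw [jacobiSmoothingFactor_zero, one_sub_add_four_mul_div_eq hden.ne', mul_assoc]
  refine ⟨jacobiSmoothingFactor_zero h k ω, hform, ?_⟩
  rw [hform, lt_add_iff_pos_right, mul_assoc]
  positivity
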